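/- In the two-state Markov chain setting with identity matrix P, perturbed matrix P̃ (flip probability ε ∈ (0,1)), initial distributions μ({1}) = p and μ̃({1}) = p - δ: if p = 1 and δ ∈ (0,1), then for every n ≥ 0, ‖ℙⁿ - ℙ̃ⁿ‖ = 2(f_n(ε) + δ(1 - f_n(ε))) where f_n(ε) = 1 - (1-ε)ⁿ; in particular the bound of the multiplicative perturbation theorem is attained with equality. -/

import Mathlib

open MeasureTheory ProbabilityTheory
open scoped ENNReal

/-- Total mass (as a real number) of a measure. -/
noncomputable def mass {X : Type*} [MeasurableSpace X] (μ : Measure X) : ℝ :=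
  (μ Set.univ).toReal

/-- Total variation distance `‖ν - ν'‖` between two finite measures. -/
noncomputable def tvDist {X : Type*} [MeasurableSpace X] (ν ν' : Measure X)
    [IsFiniteMeasure ν] [IsFiniteMeasure ν'] : ℝ :=
  (((ν.toSignedMeasure - ν'.toSignedMeasure).totalVariation) Set.univ).toReal

/-- The minimum `ν ∧ ν' := ν - (ν - ν')⁻` of two finite measures, via the
Hahn–Jordan decomposition of `ν - ν'`. -/
noncomputable def measInf {X : Type*} [MeasurableSpace X] (ν ν' : Measure X)
    [IsFiniteMeasure ν] [IsFiniteMeasure ν'] : Measure X :=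
  ν - (ν.toSignedMeasure - ν'.toSignedMeasure).toJordanDecomposition.negPart

/-- `chainLaw μ P Pr` says that `Pr n` is the law on `{0,1}^{n+1}` of the first
`n+1` states of the chain with initial distribution `μ` and one-step
history-dependent kernels `P`. -/
def chainLaw (μ : Measure (Fin 2)) (P : ∀ k : ℕ, Kernel (Fin (k + 1) → Fin 2) (Fin 2))
    (Pr : ∀ n : ℕ, Measure (Fin (n + 1) → Fin 2)) : Prop :=
  Pr 0 = μ.map (fun x => fun _ : Fin 1 => x) ∧
    ∀ n, Pr (n + 1) = ((Pr n) ⊗ₘ (P n)).map (fun q => Fin.snoc q.1 q.2)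

/-- `isIdentityKernel P` : the chain moves deterministically, staying in its
current state (identity transition matrix). -/
def isIdentityKernel (P : ∀ k : ℕ, Kernel (Fin (k + 1) → Fin 2) (Fin 2)) : Prop :=
  ∀ k ω, P k ω = Measure.dirac (ω (Fin.last k))

/-- `isFlipKernel ε P` : at each step the chain stays with probability `1 - ε`
and flips with probability `ε`. -/
def isFlipKernel (ε : ℝ) (P : ∀ k : ℕ, Kernel (Fin (k + 1) → Fin 2) (Fin 2)) : Prop :=
  ∀ k ω, P k ω = ENNReal.ofReal (1 - ε) • Measure.dirac (ω (Fin.last k)) +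
    ENNReal.ofReal ε • Measure.dirac (ω (Fin.last k) + 1)

/-! Under the identity kernel the chain started at `1` never moves, so `ℙⁿ` is the point mass at
the constant path `1`, while under the flip kernel that path has probability `(1 - δ)(1 - ε)ⁿ`.
The distance from a point mass `δₐ` to a probability measure `ν'` is `2(1 - ν'{a})`: writing
`δₐ = ν'{a} δₐ + (1 - ν'{a}) δₐ` and `ν' = ν'{a} δₐ + ν'|_{a}ᶜ`, the common part cancels and the
two remainders are mutually singular, hence form the Jordan decomposition of `δₐ - ν'`. -/

section

variable {X : Type*} [MeasurableSpace X]

theorem tvDist_eq_of_eq_add_of_mutuallySingular {ν ν' ρ α β : Measure X} [IsFiniteMeasure ν]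
    [IsFiniteMeasure ν'] (hν : ν = ρ + α) (hν' : ν' = ρ + β) (h : α ⟂ₘ β) :
    tvDist ν ν' = (α Set.univ + β Set.univ).toReal := by
  have : IsFiniteMeasure ρ := isFiniteMeasure_of_le ν (hν ▸ Measure.le_add_right le_rfl)
  have : IsFiniteMeasure α := isFiniteMeasure_of_le ν (hν ▸ Measure.le_add_left le_rfl)
  have : IsFiniteMeasure β := isFiniteMeasure_of_le ν' (hν' ▸ Measure.le_add_left le_rfl)
  subst hν hν'
  have hsub : (ρ + α).toSignedMeasure - (ρ + β).toSignedMeasure =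
      (⟨α, β, h⟩ : JordanDecomposition X).toSignedMeasure := by
    rw [Measure.toSignedMeasure_add, Measure.toSignedMeasure_add, add_sub_add_left_eq_sub]
    rfl
  rw [tvDist, SignedMeasure.totalVariation, SignedMeasure.toJordanDecomposition_eq hsub]
  rfl

variable [MeasurableSingletonClass X]

theorem MeasureTheory.Measure.eq_dirac_of_apply_singleton_eq_one {ν : Measure X}
    [IsProbabilityMeasure ν] {a : X} (h : ν {a} = 1) : ν = Measure.dirac a := by
  have hcompl : ν {a}ᶜ = 0 := by
    rw [prob_compl_eq_zero_iff (measurableSet_singleton a), h]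
  calc ν = ν.restrict {a} := (Measure.restrict_eq_self_of_ae_mem (mem_ae_iff.2 hcompl)).symm
    _ = Measure.dirac a := by rw [Measure.restrict_singleton, h, one_smul]

theorem tvDist_eq_of_apply_singleton_eq_one (ν ν' : Measure X) [IsProbabilityMeasure ν]
    [IsProbabilityMeasure ν'] {a : X} (h : ν {a} = 1) :
    tvDist ν ν' = 2 * (1 - (ν' {a}).toReal) := by
  set c := ν' {a}
  have hc : c ≤ 1 := prob_le_one
  have hν : ν = c • Measure.dirac a + (1 - c) • Measure.dirac a := by
    rw [← add_smul, add_tsub_cancel_of_le hc, one_smul,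
      Measure.eq_dirac_of_apply_singleton_eq_one h]
  have hν' : ν' = c • Measure.dirac a + ν'.restrict {a}ᶜ := by
    rw [← Measure.restrict_singleton, Measure.restrict_add_restrict_compl
      (measurableSet_singleton a)]
  have hsing : (1 - c) • Measure.dirac a ⟂ₘ ν'.restrict {a}ᶜ :=
    ⟨{a}ᶜ, (measurableSet_singleton a).compl, by simp, by simp⟩
  rw [tvDist_eq_of_eq_add_of_mutuallySingular hν hν' hsing, Measure.smul_apply,
    measure_univ, smul_eq_mul, mul_one, Measure.restrict_apply_univ,
    prob_compl_eq_one_sub (measurableSet_singleton a), ← two_mul, ENNReal.toReal_mul,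
    ENNReal.toReal_sub_of_le hc ENNReal.one_ne_top]
  simp

end

namespace chainLaw

variable {μ : Measure (Fin 2)} {P : ∀ k : ℕ, Kernel (Fin (k + 1) → Fin 2) (Fin 2)}
  {Pr : ∀ n : ℕ, Measure (Fin (n + 1) → Fin 2)}

theorem apply_zero_const (hPr : chainLaw μ P Pr) (x : Fin 2) :
    Pr 0 {fun _ => x} = μ {x} := by
  rw [hPr.1, Measure.map_apply (measurable_of_countable _) (measurableSet_singleton _)]
  congr 1
  ext y
  simp [funext_iff]

theorem apply_succ_snoc (hPr : chainLaw μ P Pr) [∀ k, IsSFiniteKernel (P k)]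
    [∀ n, SFinite (Pr n)] (n : ℕ) (ω : Fin (n + 1) → Fin 2) (x : Fin 2) :
    Pr (n + 1) {Fin.snoc ω x} = Pr n {ω} * P n ω {x} := by
  have hpre : (fun q : (Fin (n + 1) → Fin 2) × Fin 2 => (Fin.snoc q.1 q.2 : Fin (n + 2) → Fin 2))
      ⁻¹' {Fin.snoc ω x} = {ω} ×ˢ {x} := by
    ext ⟨ω', x'⟩
    simp [Fin.snoc_inj]
  rw [hPr.2, Measure.map_apply (measurable_of_countable _) (measurableSet_singleton _), hpre,
    Measure.compProd_apply_prod (measurableSet_singleton _) (measurableSet_singleton _),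
    lintegral_singleton, mul_comm]

theorem apply_const (hPr : chainLaw μ P Pr) [∀ k, IsSFiniteKernel (P k)]
    [∀ n, SFinite (Pr n)] (x : Fin 2) (n : ℕ) :
    Pr n {fun _ => x} = μ {x} * ∏ k ∈ Finset.range n, P k (fun _ => x) {x} := by
  induction n with
  | zero => simp [hPr.apply_zero_const]
  | succ n ih =>
    have hsnoc : (Fin.snoc (fun _ => x) x : Fin (n + 2) → Fin 2) = fun _ => x := by
      ext i
      refine Fin.lastCases ?_ (fun _ => ?_) i <;> simp
    rw [← hsnoc, hPr.apply_succ_snoc, ih, Finset.prod_range_succ, mul_assoc]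

end chainLaw

theorem isIdentityKernel.apply_const_singleton {P : ∀ k : ℕ, Kernel (Fin (k + 1) → Fin 2) (Fin 2)}
    (hP : isIdentityKernel P) (k : ℕ) (x : Fin 2) : P k (fun _ => x) {x} = 1 := by
  simp [hP k]

theorem isFlipKernel.apply_const_singleton {ε : ℝ}
    {P : ∀ k : ℕ, Kernel (Fin (k + 1) → Fin 2) (Fin 2)} (hP : isFlipKernel ε P) (k : ℕ)
    (x : Fin 2) : P k (fun _ => x) {x} = ENNReal.ofReal (1 - ε) := by
  have hflip : x + 1 ≠ x := by fin_cases x <;> decide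
  simp [hP k, hflip]

theorem stmt15_general (δ ε : ℝ) (hδ : δ ∈ Set.Ioo (0 : ℝ) 1) (hε : ε ∈ Set.Ioo (0 : ℝ) 1)
    (μ μ' : Measure (Fin 2))
    (hμ : μ {1} = 1) (hμ' : μ' {1} = ENNReal.ofReal (1 - δ))
    (P P' : ∀ k : ℕ, Kernel (Fin (k + 1) → Fin 2) (Fin 2))
    [∀ k, IsMarkovKernel (P k)] [∀ k, IsMarkovKernel (P' k)]
    (hP : isIdentityKernel P) (hP' : isFlipKernel ε P')
    (Pr Pr' : ∀ n : ℕ, Measure (Fin (n + 1) → Fin 2))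
    [∀ n, IsProbabilityMeasure (Pr n)] [∀ n, IsProbabilityMeasure (Pr' n)]
    (hPr : chainLaw μ P Pr) (hPr' : chainLaw μ' P' Pr') :
    ∀ n : ℕ, tvDist (Pr n) (Pr' n) =
      2 * ((1 - (1 - ε) ^ n) + δ * (1 - (1 - (1 - ε) ^ n))) := by
  intro n
  have hstay : Pr n {fun _ => 1} = 1 := by
    simp [hPr.apply_const, hμ, hP.apply_const_singleton]
  have hstay' : Pr' n {fun _ => 1} = ENNReal.ofReal (1 - δ) * ENNReal.ofReal (1 - ε) ^ n := by
    simp [hPr'.apply_const, hμ', hP'.apply_const_singleton]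
  rw [tvDist_eq_of_apply_singleton_eq_one _ _ hstay, hstay', ENNReal.toReal_mul,
    ENNReal.toReal_pow, ENNReal.toReal_ofReal (by linarith [hδ.2]),
    ENNReal.toReal_ofReal (by linarith [hε.2])]
  ring

/-- Two-state chain with `p = 1`, `δ ∈ (0,1)`:
`‖ℙⁿ − ℙ̃ⁿ‖ = 2(f_n(ε) + δ(1 − f_n(ε)))` with `f_n(ε) = 1 − (1 − ε)ⁿ`;
the multiplicative perturbation bound is attained with equality. -/
theorem stmt15 (δ ε : ℝ) (hδ : δ ∈ Set.Ioo (0 : ℝ) 1) (hε : ε ∈ Set.Ioo (0 : ℝ) 1)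
    (μ μ' : Measure (Fin 2)) [IsProbabilityMeasure μ] [IsProbabilityMeasure μ']
    (hμ : μ {1} = 1) (hμ' : μ' {1} = ENNReal.ofReal (1 - δ))
    (P P' : ∀ k : ℕ, Kernel (Fin (k + 1) → Fin 2) (Fin 2))
    [∀ k, IsMarkovKernel (P k)] [∀ k, IsMarkovKernel (P' k)]
    (hP : isIdentityKernel P) (hP' : isFlipKernel ε P')
    (Pr Pr' : ∀ n : ℕ, Measure (Fin (n + 1) → Fin 2))
    [∀ n, IsProbabilityMeasure (Pr n)] [∀ n, IsProbabilityMeasure (Pr' n)]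
    (hPr : chainLaw μ P Pr) (hPr' : chainLaw μ' P' Pr') :
    ∀ n : ℕ, tvDist (Pr n) (Pr' n) =
      2 * ((1 - (1 - ε) ^ n) + δ * (1 - (1 - (1 - ε) ^ n))) :=
  stmt15_general δ ε hδ hε μ μ' hμ hμ' P P' hP hP' Pr Pr' hPr hPr'
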